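/- For every λ ≥ 0 and all natural numbers i < j: λ·g(j,λ,{i}) = Po(i;λ) · Σ_{s=1}^{∞} ((j−1)!/(j+s−1)!)·λ^s, the series on the right converging absolutely. -/

import Mathlib

open scoped BigOperators

/-- Poisson pmf: Po(k;lam) = lam^k * e^(-lam) / k!  (with the convention 0^0 = 1). -/
noncomputable def Po (k : ℕ) (lam : ℝ) : ℝ := lam ^ k * Real.exp (-lam) / (Nat.factorial k)

/-- Poisson measure of a set A of naturals: Po(A;lam) = sum over k in A of Po(k;lam). -/
noncomputable def PoSet (A : Set ℕ) (lam : ℝ) : ℝ := ∑' k : A, Po k lam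

/-- The scalar Stein-Chen solution g(j,lam,A), defined recursively by g(0,lam,A) = 0 and
g(j,lam,A) = lam⁻¹ * ((j-1)*g(j-1,lam,A) + 1_A(j-1) - Po(A;lam))
             + (1/j) * 1_{lam=0} * (1_A(0) - 1_A(j)) for j ≥ 1,
with the convention 0⁻¹ = 0. -/
noncomputable def steinChen : ℕ → ℝ → Set ℕ → ℝ
  | 0, _, _ => 0
  | (j + 1), lam, A =>
      lam⁻¹ * ((j : ℝ) * steinChen j lam A
          + A.indicator (fun _ => (1 : ℝ)) j - PoSet A lam)
        + (1 / ((j : ℝ) + 1)) * (if lam = 0 then (1 : ℝ) else 0)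
          * (A.indicator (fun _ => (1 : ℝ)) 0 - A.indicator (fun _ => (1 : ℝ)) (j + 1))

/-!
For `λ ≠ 0` put `G j := λ ^ j / (j - 1)! * g(j, λ, A)`. The Stein–Chen recursion becomes
`G (j + 1) = G j + λ ^ j / j! * (1_A(j) - Po(A; λ))`, so `G j` is a partial sum of the Poisson
weights. For `A = {i}` and `j > i` this is `λ ^ i / i! - Po(i; λ) * ∑_{k<j} λ ^ k / k!`, which is
`Po(i; λ)` times the tail `∑_{k≥j} λ ^ k / k!` of the exponential series; dividing by
`λ ^ (j - 1) / (j - 1)!` gives the claim. At `λ = 0` both sides vanish.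
-/

open Finset Nat

lemma steinChen_succ_of_ne_zero {lam : ℝ} (hlam : lam ≠ 0) (A : Set ℕ) (j : ℕ) :
    lam * steinChen (j + 1) lam A =
      j * steinChen j lam A + A.indicator (fun _ => (1 : ℝ)) j - PoSet A lam := by
  rw [steinChen, if_neg hlam]
  field_simp
  ring

lemma poSet_singleton (i : ℕ) (lam : ℝ) : PoSet {i} lam = Po i lam :=
  tsum_singleton i (Po · lam)

lemma pow_div_factorial_mul_steinChen {lam : ℝ} (hlam : lam ≠ 0) (A : Set ℕ) (m : ℕ) :
    lam ^ (m + 1) / m ! * steinChen (m + 1) lam A =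
      ∑ k ∈ range (m + 1), lam ^ k / k ! * (A.indicator (fun _ => (1 : ℝ)) k - PoSet A lam) := by
  induction m with
  | zero => simpa [steinChen] using steinChen_succ_of_ne_zero hlam A 0
  | succ m ih =>
    have hsplit : lam ^ (m + 2) / (m + 1)! * steinChen (m + 2) lam A =
        lam ^ (m + 1) / (m + 1)! * (lam * steinChen (m + 1 + 1) lam A) := by ring
    rw [sum_range_succ, ← ih, hsplit, steinChen_succ_of_ne_zero hlam, factorial_succ]
    push_cast
    field_simp
    ring

lemma exp_sub_sum_range_pow_div_factorial (x : ℝ) (n : ℕ) :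
    Real.exp x - ∑ k ∈ range n, x ^ k / k ! = ∑' t, x ^ (t + n) / (t + n)! := by
  have hexp : HasSum (fun k => x ^ k / k !) (Real.exp x) := by
    rw [Real.exp_eq_exp_ℝ]
    exact NormedSpace.expSeries_div_hasSum_exp x
  exact ((hasSum_nat_add_iff' n).mpr hexp).tsum_eq.symm

lemma pow_div_factorial_mul_steinChen_singleton {lam : ℝ} (hlam : lam ≠ 0) {i m : ℕ}
    (him : i ≤ m) :
    lam ^ (m + 1) / m ! * steinChen (m + 1) lam {i} =
      Po i lam * ∑' t, lam ^ (t + (m + 1)) / (t + (m + 1))! := by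
  have hPo : lam ^ i / i ! = Po i lam * Real.exp lam := by
    rw [Po, mul_div_right_comm, mul_assoc, ← Real.exp_add, neg_add_cancel, Real.exp_zero,
      mul_one]
  rw [pow_div_factorial_mul_steinChen hlam, ← exp_sub_sum_range_pow_div_factorial]
  simp only [mul_sub, sum_sub_distrib, Set.indicator, Set.mem_singleton_iff, mul_ite, mul_one,
    mul_zero]
  rw [sum_ite_eq', if_pos (mem_range.2 (lt_succ_of_le him)), hPo, ← sum_mul, poSet_singleton]
  ring

lemma summable_div_factorial_add_mul_pow (c x : ℝ) (j : ℕ) :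
    Summable (fun t : ℕ => c / (j + t)! * x ^ (t + 1)) := by
  refine Summable.of_norm_bounded
    ((Real.summable_pow_div_factorial |x|).mul_left (|c| * |x|)) fun t => ?_
  have hfac : (t ! : ℝ) ≤ (j + t)! := by exact_mod_cast factorial_le (le_add_left t j)
  rw [Real.norm_eq_abs, abs_mul, abs_div, abs_pow, Nat.abs_cast, pow_succ, mul_comm (|x| ^ t)]
  calc |c| / (j + t)! * (|x| * |x| ^ t) ≤ |c| / t ! * (|x| * |x| ^ t) := by
        gcongr
    _ = |c| * |x| * (|x| ^ t / t !) := by ring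

/-- The series is indexed by `s = t + 1`, `t ∈ ℕ`, so that `(j + s - 1)! = (j + t)!`. -/
theorem steinChen_singleton_series_general (lam : ℝ) (i j : ℕ) (hij : i < j) :
    Summable (fun t : ℕ =>
      |(((j - 1).factorial : ℝ) / ((j + t).factorial : ℝ)) * lam ^ (t + 1)|) ∧
    lam * steinChen j lam {i} =
      Po i lam *
        ∑' t : ℕ, (((j - 1).factorial : ℝ) / ((j + t).factorial : ℝ)) * lam ^ (t + 1) := by
  obtain ⟨m, rfl⟩ : ∃ m, j = m + 1 := ⟨j - 1, by omega⟩
  refine ⟨(summable_div_factorial_add_mul_pow _ lam (m + 1)).abs, ?_⟩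
  rcases eq_or_ne lam 0 with rfl | hlam
  · simp
  rw [add_tsub_cancel_right]
  calc lam * steinChen (m + 1) lam {i}
      = m ! / lam ^ m * (lam ^ (m + 1) / m ! * steinChen (m + 1) lam {i}) := by
        field_simp
        ring
    _ = m ! / lam ^ m * (Po i lam * ∑' t, lam ^ (t + (m + 1)) / (t + (m + 1))!) := by
        rw [pow_div_factorial_mul_steinChen_singleton hlam (Nat.lt_succ_iff.1 hij)]
    _ = Po i lam * ∑' t, (m ! : ℝ) / (m + 1 + t)! * lam ^ (t + 1) := by
        rw [mul_left_comm, ← tsum_mul_left]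
        congr 1
        refine tsum_congr fun t => ?_
        rw [add_comm (m + 1) t]
        field_simp
        ring

/-- For lam ≥ 0 and i < j:
lam * g(j,lam,{i}) = Po(i;lam) * sum_{s=1}^infty ((j-1)!/(j+s-1)!) * lam^s,
the series converging absolutely (indexed here by s = t+1, t ∈ ℕ, so that
(j+s-1)! = (j+t)!). -/
theorem steinChen_singleton_series (lam : ℝ) (hlam : 0 ≤ lam) (i j : ℕ) (hij : i < j) :
    Summable (fun t : ℕ =>
      |(((j - 1).factorial : ℝ) / ((j + t).factorial : ℝ)) * lam ^ (t + 1)|) ∧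
    lam * steinChen j lam {i} =
      Po i lam *
        ∑' t : ℕ, (((j - 1).factorial : ℝ) / ((j + t).factorial : ℝ)) * lam ^ (t + 1) :=
  steinChen_singleton_series_general lam i j hij
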